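/- Let N > 0, m₁ ∈ ℤ with m₁ ≤ 0, C₁ ≥ -2N, -N² - NC₁ < C₂ ≤ C₁²/4, r₀ = (-C₁+sqrt(C₁²-4C₂))/2. Then the function r ↦ (r²-N²)·|Φ₃(r)|², where Φ₃(r) = (r-r₀)^{(2m₁-1)(r₀²-N²)/(8N(2r₀+C₁)) - 1/4}·e^{(2m₁-1)r/(8N)}·(r-N)^{-1/2}·(r+r₀+C₁)^{(2m₁-1)(N²-(r₀+C₁)²)/(8N(2r₀+C₁)) - 1/4}, is bounded near r = N and tends to 0 as r → ∞; consequently ∫_N^∞ (r²-N²)|Φ₃(r)|² dr < ∞. -/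
import Mathlib

open Real Filter Set Asymptotics MeasureTheory

private lemma sq_rpow' {x : ℝ} (hx : 0 < x) (p : ℝ) : (x ^ p) ^ 2 = x ^ (2 * p) := by
  rw [← Real.rpow_natCast (x ^ p) 2, ← Real.rpow_mul hx.le]
  norm_num [mul_comm]

private lemma axp (s b t : ℝ) (hb : 0 < b) :
    Tendsto (fun x : ℝ => (x - t) ^ s * Real.exp (-b * x)) atTop (nhds 0) := by
  have h := tendsto_rpow_mul_exp_neg_mul_atTop_nhds_zero s b hb
  have h2 : Tendsto (fun x : ℝ => x - t) atTop atTop := by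
    simpa [sub_eq_add_neg] using tendsto_atTop_add_const_right atTop (-t) tendsto_id
  have h4 := (h.comp h2).mul_const (Real.exp (-b * t))
  rw [zero_mul] at h4
  refine h4.congr fun x => ?_
  simp only [Function.comp_apply]
  rw [mul_assoc, ← Real.exp_add]
  congr 2
  ring

private lemma decay3 (t₀ t₁ N' p q c : ℝ) (hc : c < 0) :
    Tendsto (fun r : ℝ => (r + N') * ((r - t₀) ^ p * ((r - t₁) ^ q * Real.exp (c * r))))
      atTop (nhds 0) := by
  have hb : 0 < -c / 3 := by linarith
  have h := ((axp 1 (-c / 3) (-N') hb).mul (axp p (-c / 3) t₀ hb)).mul (axp q (-c / 3) t₁ hb)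
  have h0 : ((0 : ℝ) * 0) * 0 = 0 := by ring
  rw [h0] at h
  refine h.congr fun x => ?_
  rw [Real.rpow_one, sub_neg_eq_add]
  rw [show -(-c / 3) * x = c / 3 * x by ring]
  have key : Real.exp (c / 3 * x) * Real.exp (c / 3 * x) * Real.exp (c / 3 * x)
      = Real.exp (c * x) := by
    rw [← Real.exp_add, ← Real.exp_add]; congr 1; ring
  rw [← key]; ring

/-- `(r²-N²)|Φ₃|²` is bounded near `r = N` and tends to `0` at infinity,
hence `∫_N^∞ (r²-N²)|Φ₃|² dr < ∞`. -/
theorem stmt10 (N C₁ C₂ : ℝ) (m₁ : ℤ) (hN : 0 < N) (hm₁ : m₁ ≤ 0)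
    (hC₁ : -2 * N ≤ C₁) (hC₂l : -N ^ 2 - N * C₁ < C₂) (hC₂u : C₂ ≤ C₁ ^ 2 / 4) :
    let r₀ : ℝ := (-C₁ + Real.sqrt (C₁ ^ 2 - 4 * C₂)) / 2
    let Φ₃ : ℝ → ℝ := fun r =>
      (r - r₀) ^ ((2 * (m₁ : ℝ) - 1) * (r₀ ^ 2 - N ^ 2) / (8 * N * (2 * r₀ + C₁)) - 1 / 4) *
        Real.exp ((2 * (m₁ : ℝ) - 1) * r / (8 * N)) * (r - N) ^ (-(1 : ℝ) / 2) *
        (r + r₀ + C₁) ^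
          ((2 * (m₁ : ℝ) - 1) * (N ^ 2 - (r₀ + C₁) ^ 2) / (8 * N * (2 * r₀ + C₁)) - 1 / 4)
    (∃ ε > (0 : ℝ), ∃ M : ℝ, ∀ r ∈ Set.Ioo N (N + ε), (r ^ 2 - N ^ 2) * |Φ₃ r| ^ 2 ≤ M) ∧
      Filter.Tendsto (fun r : ℝ => (r ^ 2 - N ^ 2) * |Φ₃ r| ^ 2) Filter.atTop (nhds 0) ∧
      MeasureTheory.IntegrableOn (fun r : ℝ => (r ^ 2 - N ^ 2) * |Φ₃ r| ^ 2)
        (Set.Ioi N) := by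
  intro r₀ Φ₃
  have hm : (m₁ : ℝ) ≤ 0 := by exact_mod_cast hm₁
  have hs0 : 0 ≤ Real.sqrt (C₁ ^ 2 - 4 * C₂) := Real.sqrt_nonneg _
  have hs2 : Real.sqrt (C₁ ^ 2 - 4 * C₂) ^ 2 = C₁ ^ 2 - 4 * C₂ :=
    Real.sq_sqrt (by linarith)
  have hr₀ : r₀ = (-C₁ + Real.sqrt (C₁ ^ 2 - 4 * C₂)) / 2 := rfl
  have ht : 0 ≤ N + r₀ + C₁ := by rw [hr₀]; linarith
  have hprod : 0 < (N - r₀) * (N + r₀ + C₁) := by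
    rw [hr₀]; nlinarith [hs2, hC₂l]
  have hB : 0 < N + r₀ + C₁ := by
    rcases ht.lt_or_eq with h | h
    · exact h
    · exfalso; rw [← h, mul_zero] at hprod; exact lt_irrefl 0 hprod
  have hA : 0 < N - r₀ := by nlinarith [hprod, hB]
  set P : ℝ := (2 * (m₁ : ℝ) - 1) * (r₀ ^ 2 - N ^ 2) / (8 * N * (2 * r₀ + C₁)) - 1 / 4 with hP
  set Q : ℝ := (2 * (m₁ : ℝ) - 1) * (N ^ 2 - (r₀ + C₁) ^ 2) / (8 * N * (2 * r₀ + C₁)) - 1 / 4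
    with hQ
  set c : ℝ := (2 * (m₁ : ℝ) - 1) / (4 * N) with hc_def
  have hc : c < 0 := div_neg_of_neg_of_pos (by linarith) (by linarith)
  set g : ℝ → ℝ := fun r =>
    (r + N) * ((r - r₀) ^ (2 * P) * ((r + r₀ + C₁) ^ (2 * Q) * Real.exp (c * r))) with hg
  have key : ∀ r ∈ Set.Ioi N, (r ^ 2 - N ^ 2) * |Φ₃ r| ^ 2 = g r := by
    intro r hr
    rw [Set.mem_Ioi] at hr
    have hx : 0 < r - r₀ := by linarith
    have hw : 0 < r - N := by linarith
    have hy : 0 < r + r₀ + C₁ := by linarith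
    have hΦ : Φ₃ r = (r - r₀) ^ P * Real.exp ((2 * (m₁ : ℝ) - 1) * r / (8 * N)) *
        (r - N) ^ (-(1 : ℝ) / 2) * (r + r₀ + C₁) ^ Q := rfl
    rw [hΦ]
    have hpos : (0 : ℝ) < (r - r₀) ^ P * Real.exp ((2 * (m₁ : ℝ) - 1) * r / (8 * N)) *
        (r - N) ^ (-(1 : ℝ) / 2) * (r + r₀ + C₁) ^ Q :=
      mul_pos (mul_pos (mul_pos (Real.rpow_pos_of_pos hx _) (Real.exp_pos _))
        (Real.rpow_pos_of_pos hw _)) (Real.rpow_pos_of_pos hy _)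
    rw [abs_of_pos hpos, mul_pow, mul_pow, mul_pow, sq_rpow' hx, sq_rpow' hw, sq_rpow' hy,
      pow_two (Real.exp _), ← Real.exp_add,
      show (2 * (m₁ : ℝ) - 1) * r / (8 * N) + (2 * (m₁ : ℝ) - 1) * r / (8 * N) = c * r by
        rw [hc_def]; field_simp; ring,
      show (2 : ℝ) * (-(1 : ℝ) / 2) = -1 by norm_num, Real.rpow_neg_one, hg]
    field_simp
    ring
  have hg_cont : ContinuousOn g (Set.Ici N) := by
    rw [hg]
    refine ContinuousOn.mul ((continuous_id.add continuous_const).continuousOn) ?_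
    refine ContinuousOn.mul ?_ (ContinuousOn.mul ?_ ?_)
    · refine ContinuousOn.rpow_const ((continuous_id.sub continuous_const).continuousOn) ?_
      intro x hx
      have : N ≤ x := hx
      exact Or.inl (by intro h; nlinarith)
    · refine ContinuousOn.rpow_const
        (((continuous_id.add continuous_const).add continuous_const).continuousOn) ?_
      intro x hx
      have : N ≤ x := hx
      exact Or.inl (by intro h; nlinarith)
    · exact (Real.continuous_exp.comp (continuous_const.mul continuous_id)).continuousOn
  refine ⟨⟨1, one_pos, ?_⟩, ?_, ?_⟩
  · obtain ⟨M, hM⟩ := (isCompact_Icc (a := N) (b := N + 1)).exists_bound_of_continuousOn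
      (hg_cont.mono Set.Icc_subset_Ici_self)
    refine ⟨M, fun r hr => ?_⟩
    rw [key r (Set.mem_Ioi.2 hr.1)]
    have h1 := hM r ⟨hr.1.le, hr.2.le⟩
    rw [Real.norm_eq_abs] at h1
    linarith [le_abs_self (g r)]
  · have hdec : Tendsto g atTop (nhds 0) := by
      refine (decay3 r₀ (-(r₀ + C₁)) N (2 * P) (2 * Q) c hc).congr fun r => ?_
      rw [sub_neg_eq_add, ← add_assoc]
    refine Filter.Tendsto.congr' ?_ hdec
    filter_upwards [eventually_gt_atTop N] with r hr using (key r (Set.mem_Ioi.2 hr)).symm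
  · have hb : (0 : ℝ) < -c / 2 := by linarith
    have hg2 : Tendsto (fun r => g r * Real.exp (-c / 2 * r)) atTop (nhds 0) := by
      refine (decay3 r₀ (-(r₀ + C₁)) N (2 * P) (2 * Q) (c / 2) (by linarith)).congr fun r => ?_
      show (r + N) * ((r - r₀) ^ (2 * P) * ((r - -(r₀ + C₁)) ^ (2 * Q) *
        Real.exp (c / 2 * r))) =
        (r + N) * ((r - r₀) ^ (2 * P) * ((r + r₀ + C₁) ^ (2 * Q) * Real.exp (c * r))) *
          Real.exp (-c / 2 * r)
      rw [sub_neg_eq_add, ← add_assoc,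
        show c / 2 * r = c * r + -c / 2 * r by ring, Real.exp_add]
      ring
    have hO : g =O[atTop] fun r => Real.exp (-(-c / 2) * r) := by
      have h2 := (hg2.isBigO_one ℝ).mul
        (isBigO_refl (fun r : ℝ => Real.exp (-(-c / 2) * r)) atTop)
      refine h2.congr (fun x => ?_) (fun x => one_mul _)
      rw [mul_assoc, ← Real.exp_add, show -c / 2 * x + -(-c / 2) * x = 0 by ring,
        Real.exp_zero, mul_one]
    have hint : IntegrableOn g (Set.Ioi N) := integrable_of_isBigO_exp_neg hb hg_cont hO
    exact hint.congr_fun (fun r hr => (key r hr).symm) measurableSet_Ioi
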